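/- Let X be an n×n real symmetric PSD matrix with rank(X) = r, and let K be a positive integer with r(r+1)/2 > K+2. Given K+2 real symmetric n×n matrices P, R₁, …, R_K, E, there exists a nonzero real symmetric n×n matrix V whose column space is contained in the column space of X such that Tr(PV) = 0, Tr(RₖV) = 0 for all k = 1, …, K, and Tr(EV) = 0. -/

import Mathlib

/-!
A symmetric matrix whose column space lies in an `r`-dimensional subspace `U = range W` is of the
form `W * S * Wᵀ` with `S` a symmetric `r × r` matrix, so these matrices form a space of dimension
`r (r + 1) / 2` (parametrised by the entries of `S` indexed by `Sym2 (Fin r)`). Each trace condition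
`tr (C * V) = 0` is one linear equation on that space, and fewer equations than its dimension
always leave a nonzero common solution.
-/

open Matrix Module

theorem Module.Dual.exists_ne_zero_forall_eq_zero {K V ι : Type*} [Field K] [AddCommGroup V]
    [Module K V] [FiniteDimensional K V] [Fintype ι] (φ : ι → Dual K V)
    (h : Fintype.card ι < finrank K V) : ∃ v ≠ 0, ∀ i, φ i v = 0 := by
  have hker : LinearMap.ker (LinearMap.pi φ) ≠ ⊥ :=
    LinearMap.ker_ne_bot_of_finrank_lt (by rwa [finrank_fintype_fun_eq_card])
  obtain ⟨v, hv, hv0⟩ := (Submodule.ne_bot_iff _).mp hker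
  exact ⟨v, hv0, fun i => congrFun hv i⟩

theorem Module.finrank_sym2_fun (R ι : Type*) [CommRing R] [StrongRankCondition R] [Fintype ι] :
    finrank R (Sym2 ι → R) = (Fintype.card ι + 1).choose 2 := by
  rw [finrank_fintype_fun_eq_card, Sym2.card]

namespace Matrix

section Sym2

variable {R ι m : Type*} [CommSemiring R]

def ofSym2 : (Sym2 ι → R) →ₗ[R] Matrix ι ι R where
  toFun c := of fun i j => c s(i, j)
  map_add' _ _ := rfl
  map_smul' _ _ := rfl

theorem isSymm_ofSym2 (c : Sym2 ι → R) : (ofSym2 c).IsSymm :=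
  IsSymm.ext fun _ _ => congrArg c Sym2.eq_swap

theorem ofSym2_injective : Function.Injective (ofSym2 : (Sym2 ι → R) → Matrix ι ι R) := by
  intro c d h
  exact funext <| Sym2.ind fun i j => congrFun (congrFun h i) j

variable [Fintype ι]

def sym2Congr (W : Matrix m ι R) : (Sym2 ι → R) →ₗ[R] Matrix m m R :=
  mulRightLinearMap m R Wᵀ ∘ₗ mulLeftLinearMap ι R W ∘ₗ ofSym2

theorem sym2Congr_apply (W : Matrix m ι R) (c : Sym2 ι → R) :
    sym2Congr W c = W * ofSym2 c * Wᵀ :=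
  rfl

theorem isSymm_sym2Congr (W : Matrix m ι R) (c : Sym2 ι → R) : (sym2Congr W c).IsSymm := by
  rw [sym2Congr_apply, IsSymm, transpose_mul, transpose_mul, transpose_transpose,
    (isSymm_ofSym2 c).eq, Matrix.mul_assoc]

theorem sym2Congr_injective [DecidableEq ι] [Fintype m] {W : Matrix m ι R} {L : Matrix ι m R}
    (hLW : L * W = 1) :
    Function.Injective (sym2Congr W) := by
  have hcancel : ∀ c, L * sym2Congr W c * Lᵀ = ofSym2 c := fun c => by
    rw [sym2Congr_apply, ← Matrix.mul_assoc, ← Matrix.mul_assoc, hLW, Matrix.one_mul,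
      Matrix.mul_assoc, ← transpose_mul, hLW, transpose_one, Matrix.mul_one]
  intro c d h
  exact ofSym2_injective (by rw [← hcancel c, ← hcancel d, h])

theorem range_toLin'_sym2Congr_le [DecidableEq ι] [Fintype m] [DecidableEq m]
    (W : Matrix m ι R) (c : Sym2 ι → R) :
    LinearMap.range (toLin' (sym2Congr W c)) ≤ LinearMap.range (toLin' W) := by
  rw [sym2Congr_apply, Matrix.mul_assoc, toLin'_mul]
  exact LinearMap.range_comp_le_range _ _

end Sym2

variable {K m : Type*} [Field K] [Fintype m] [DecidableEq m]

theorem exists_mul_eq_one_range_toLin'_eq (U : Submodule K (m → K)) :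
    ∃ (W : Matrix m (Fin (finrank K U)) K) (L : Matrix (Fin (finrank K U)) m K),
      L * W = 1 ∧ LinearMap.range (toLin' W) = U := by
  let f : (Fin (finrank K U) → K) →ₗ[K] m → K :=
    U.subtype ∘ₗ (Module.finBasis K U).equivFun.symm.toLinearMap
  obtain ⟨g, hgf⟩ := f.exists_leftInverse_of_injective <| LinearMap.ker_eq_bot.mpr <|
    U.injective_subtype.comp (Module.finBasis K U).equivFun.symm.injective
  refine ⟨LinearMap.toMatrix' f, LinearMap.toMatrix' g, ?_, ?_⟩
  · rw [← LinearMap.toMatrix'_comp, hgf, LinearMap.toMatrix'_id]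
  · rw [toLin'_toMatrix', LinearMap.range_comp_of_range_eq_top _ (LinearEquiv.range _),
      Submodule.range_subtype]

theorem exists_isSymm_range_le_forall_trace_mul_eq_zero {ι : Type*} [Fintype ι]
    (U : Submodule K (m → K)) (C : ι → Matrix m m K)
    (h : Fintype.card ι < (finrank K U + 1).choose 2) :
    ∃ V : Matrix m m K, V ≠ 0 ∧ V.IsSymm ∧ LinearMap.range (toLin' V) ≤ U ∧
      ∀ i, (C i * V).trace = 0 := by
  obtain ⟨W, L, hLW, hW⟩ := exists_mul_eq_one_range_toLin'_eq U
  let φ : ι → Dual K (Sym2 (Fin (finrank K U)) → K) := fun i =>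
    traceLinearMap m K K ∘ₗ mulLeftLinearMap m K (C i) ∘ₗ sym2Congr W
  obtain ⟨c, hc0, hc⟩ := Dual.exists_ne_zero_forall_eq_zero φ <| by
    rwa [finrank_sym2_fun, Fintype.card_fin]
  refine ⟨sym2Congr W c, ?_, isSymm_sym2Congr W c,
    (range_toLin'_sym2Congr_le W c).trans hW.le, hc⟩
  rw [← map_zero (sym2Congr W)]
  exact (sym2Congr_injective hLW).ne hc0

end Matrix

theorem exists_null_direction_general {n K r : ℕ}
    (X : Matrix (Fin n) (Fin n) ℝ) (hr : X.rank = r)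
    (hrK : K + 2 < r * (r + 1) / 2)
    (P E : Matrix (Fin n) (Fin n) ℝ) (R : Fin K → Matrix (Fin n) (Fin n) ℝ) :
    ∃ V : Matrix (Fin n) (Fin n) ℝ, V ≠ 0 ∧ V.IsSymm ∧
      LinearMap.range (Matrix.toLin' V) ≤ LinearMap.range (Matrix.toLin' X) ∧
      (P * V).trace = 0 ∧ (∀ k, (R k * V).trace = 0) ∧ (E * V).trace = 0 := by
  have hdim : finrank ℝ (LinearMap.range (toLin' X)) = r := by
    rw [toLin'_apply', ← hr, Matrix.rank]
  obtain ⟨V, hV0, hVsymm, hVrange, hV⟩ :=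
    exists_isSymm_range_le_forall_trace_mul_eq_zero (LinearMap.range (toLin' X))
      (vecCons P (vecCons E R)) <| by
        rwa [hdim, Fintype.card_fin, Nat.choose_two_right, Nat.add_sub_cancel, mul_comm]
  exact ⟨V, hV0, hVsymm, hVrange, hV 0, fun k => hV k.succ.succ, hV 1⟩

/-- Dimension-counting step of rank reduction: if `rank(X)(rank(X)+1)/2 > K+2`,
then there is a nonzero symmetric matrix `V`, with column space contained in
that of `X`, orthogonal (in trace inner product) to the `K+2` given symmetric
matrices `P`, `R₁, …, R_K`, `E`. -/
theorem exists_null_direction {n K r : ℕ} (hK : 0 < K)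
    (X : Matrix (Fin n) (Fin n) ℝ) (hX : X.PosSemidef) (hr : X.rank = r)
    (hrK : K + 2 < r * (r + 1) / 2)
    (P E : Matrix (Fin n) (Fin n) ℝ) (R : Fin K → Matrix (Fin n) (Fin n) ℝ)
    (hP : P.IsSymm) (hE : E.IsSymm) (hR : ∀ k, (R k).IsSymm) :
    ∃ V : Matrix (Fin n) (Fin n) ℝ, V ≠ 0 ∧ V.IsSymm ∧
      LinearMap.range (Matrix.toLin' V) ≤ LinearMap.range (Matrix.toLin' X) ∧
      (P * V).trace = 0 ∧ (∀ k, (R k * V).trace = 0) ∧ (E * V).trace = 0 :=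
  exists_null_direction_general X hr hrK P E R
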